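/- Let a₀ : ℝ → ℝ and let q : ℝ → ℝ³ be three times differentiable with q'''(t) + a₀(t) q(t) = 0 for all t. Then p(t) := q(t) × q'(t) is three times differentiable and satisfies p'''(t) − a₀(t) p(t) = 0 for all t. -/

import Mathlib

open Matrix

/-!
Differentiating `p = q × q'` with the Leibniz rule, every term containing the cross product
of a vector with itself or with a multiple of itself vanishes: `p' = q × q''`,
`p'' = q' × q'' + q × q''' = q' × q''` because `q''' = -a₀ q`, and finally
`p''' = q' × q''' = -a₀ (q' × q) = a₀ p`.
-/

section CrossDeriv

variable {𝕜 : Type*} [NontriviallyNormedField 𝕜] {f g : 𝕜 → Fin 3 → 𝕜} {v w : Fin 3 → 𝕜}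
  {c t : 𝕜}

theorem HasDerivAt.cross (hf : HasDerivAt f v t) (hg : HasDerivAt g w t) :
    HasDerivAt (fun s => f s ⨯₃ g s) (v ⨯₃ g t + f t ⨯₃ w) t := by
  rw [hasDerivAt_pi] at hf hg ⊢
  intro i
  fin_cases i
  · convert ((hf 1).mul (hg 2)).sub ((hf 2).mul (hg 1)) using 1
    · rfl
    · simp [cross_apply]; ring
  · convert ((hf 2).mul (hg 0)).sub ((hf 0).mul (hg 2)) using 1
    · rfl
    · simp [cross_apply]; ring
  · convert ((hf 0).mul (hg 1)).sub ((hf 1).mul (hg 0)) using 1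
    · rfl
    · simp [cross_apply]; ring

theorem HasDerivAt.cross_of_hasDerivAt_eq (hf : HasDerivAt f (g t) t) (hg : HasDerivAt g w t) :
    HasDerivAt (fun s => f s ⨯₃ g s) (f t ⨯₃ w) t := by
  simpa only [cross_self, zero_add] using hf.cross hg

theorem HasDerivAt.cross_of_hasDerivAt_smul (hf : HasDerivAt f v t)
    (hg : HasDerivAt g (c • f t) t) :
    HasDerivAt (fun s => f s ⨯₃ g s) (v ⨯₃ g t) t := by
  simpa only [LinearMap.map_smul, cross_self, smul_zero, add_zero] using hf.cross hg

end CrossDeriv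

theorem dual_curve_Laguerre_Forsyth (a₀ : ℝ → ℝ) (q : ℝ → Fin 3 → ℝ)
    (hq1 : Differentiable ℝ q)
    (hq2 : Differentiable ℝ (deriv q))
    (hq3 : Differentiable ℝ (deriv (deriv q)))
    (hode : ∀ t, deriv (deriv (deriv q)) t + a₀ t • q t = 0) :
    Differentiable ℝ (fun t => q t ⨯₃ deriv q t) ∧
    Differentiable ℝ (deriv (fun t => q t ⨯₃ deriv q t)) ∧
    Differentiable ℝ (deriv (deriv (fun t => q t ⨯₃ deriv q t))) ∧
    ∀ t, deriv (deriv (deriv (fun s => q s ⨯₃ deriv q s))) t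
      - a₀ t • (q t ⨯₃ deriv q t) = 0 := by
  have hq''' (t : ℝ) : HasDerivAt (deriv (deriv q)) (-a₀ t • q t) t := by
    rw [neg_smul, ← eq_neg_of_add_eq_zero_left (hode t)]
    exact (hq3 t).hasDerivAt
  have hp' (t : ℝ) : HasDerivAt (fun s => q s ⨯₃ deriv q s) (q t ⨯₃ deriv (deriv q) t) t :=
    (hq1 t).hasDerivAt.cross_of_hasDerivAt_eq (hq2 t).hasDerivAt
  have hp'' (t : ℝ) :
      HasDerivAt (fun s => q s ⨯₃ deriv (deriv q) s) (deriv q t ⨯₃ deriv (deriv q) t) t :=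
    (hq1 t).hasDerivAt.cross_of_hasDerivAt_smul (hq''' t)
  have hp''' (t : ℝ) :
      HasDerivAt (fun s => deriv q s ⨯₃ deriv (deriv q) s) (a₀ t • (q t ⨯₃ deriv q t)) t := by
    convert (hq2 t).hasDerivAt.cross_of_hasDerivAt_eq (hq''' t) using 1
    rw [LinearMap.map_smul, ← cross_anticomm, smul_neg, neg_smul]
  have hderiv1 := funext fun t => (hp' t).deriv
  have hderiv2 := funext fun t => (hp'' t).deriv
  refine ⟨fun t => (hp' t).differentiableAt, ?_, ?_, fun t => ?_⟩
  · exact hderiv1 ▸ fun t => (hp'' t).differentiableAt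
  · exact hderiv1 ▸ hderiv2 ▸ fun t => (hp''' t).differentiableAt
  · rw [hderiv1, hderiv2, (hp''' t).deriv, sub_self]
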